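/- arXiv:1510.03075 — 4 statements merged into one kernel-verified Lean document; each statement's English description precedes it below -/
import Mathlib

section
/- Let T be a finitely cyclic bounded operator on a complex Hilbert space whose point spectrum is empty. Then the approximate point spectrum of T equals the essential spectrum of T. -/
open ContinuousLinearMap

variable {H : Type*} [NormedAddCommGroup H] [InnerProductSpace ℂ H] [CompleteSpace H]

/-- An operator is Fredholm if its kernel is finite dimensional, its range is closed,
and its range has finite codimension. -/
def IsFredholmOp (A : H →L[ℂ] H) : Prop :=
  FiniteDimensional ℂ (LinearMap.ker (A : H →ₗ[ℂ] H)) ∧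
    IsClosed (Set.range A) ∧
    FiniteDimensional ℂ (H ⧸ LinearMap.range (A : H →ₗ[ℂ] H))

/-- The approximate point spectrum: the set of `w` such that `T - w` is not bounded below. -/
def approxPointSpectrum (T : H →L[ℂ] H) : Set ℂ :=
  {w : ℂ | ¬ ∃ c : ℝ, 0 < c ∧ ∀ x : H, c * ‖x‖ ≤ ‖(T - w • (1 : H →L[ℂ] H)) x‖}

/-- The essential spectrum: the set of `w` such that `T - w` is not Fredholm. -/
def essentialSpectrum (T : H →L[ℂ] H) : Set ℂ :=
  {w : ℂ | ¬ IsFredholmOp (T - w • (1 : H →L[ℂ] H))}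

/-- `T` is finitely cyclic: finitely many vectors whose orbit under `T` spans densely. -/
def FinitelyCyclic (T : H →L[ℂ] H) : Prop :=
  ∃ (m : ℕ) (h : Fin m → H),
    (Submodule.span ℂ {x : H | ∃ (k : ℕ) (i : Fin m), x = (T ^ k) (h i)}).topologicalClosure = ⊤

/-!
For injective `A = T - w`, being bounded below is equivalent to having closed range (open mapping
theorem), so it remains to see that such an `A` has finite-codimensional range. Since `T - w`
divides `T ^ k - w ^ k`, every orbit vector `T ^ k hᵢ` lies in `ran A + span {hᵢ}`. This subspace
is closed, being a closed subspace plus a finite-dimensional one, and contains a dense set, so it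
is all of `H`: the quotient `H ⧸ ran A` is spanned by the images of the `hᵢ`.
-/

theorem Module.End.pow_apply_mem_range_sub_smul_sup_span {R M : Type*} [CommRing R]
    [AddCommGroup M] [Module R M] (f : Module.End R M) (w : R) (k : ℕ) (x : M) :
    (f ^ k) x ∈ LinearMap.range (f - w • 1) ⊔ R ∙ x := by
  obtain ⟨g, hg⟩ := ((Commute.one_right f).smul_right w).sub_dvd_pow_sub_pow k
  have hfk : (f ^ k) x = (f - w • 1) (g x) + w ^ k • x := by
    rw [← Module.End.mul_apply, ← hg, smul_pow, one_pow]
    simp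
  rw [hfk]
  exact Submodule.add_mem_sup (LinearMap.mem_range_self _ _)
    (Submodule.smul_mem _ _ (Submodule.mem_span_singleton_self x))

section

variable {𝕜 E : Type*} [NontriviallyNormedField 𝕜] [CompleteSpace 𝕜]
  [AddCommGroup E] [TopologicalSpace E] [IsTopologicalAddGroup E] [Module 𝕜 E]
  [ContinuousSMul 𝕜 E]

theorem ContinuousLinearMap.finiteDimensional_quotient_range_sub_smul_one {ι : Type*} [Finite ι]
    (T : E →L[𝕜] E) (v : ι → E)
    (hv : (Submodule.span 𝕜 {x : E | ∃ (k : ℕ) (i : ι), x = (T ^ k) (v i)}).topologicalClosure = ⊤)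
    (w : 𝕜) (hcl : IsClosed (Set.range (T - w • (1 : E →L[𝕜] E)))) :
    FiniteDimensional 𝕜 (E ⧸ LinearMap.range ((T - w • (1 : E →L[𝕜] E)) : E →ₗ[𝕜] E)) := by
  let R := LinearMap.range ((T - w • (1 : E →L[𝕜] E)) : E →ₗ[𝕜] E)
  let W := Submodule.span 𝕜 (Set.range v)
  have : FiniteDimensional 𝕜 W := FiniteDimensional.span_of_finite 𝕜 (Set.finite_range v)
  have hRW_closed : IsClosed ((R ⊔ W : Submodule 𝕜 E) : Set E) :=
    R.isClosed_sup_finiteDimensional W hcl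
  have horbit : Submodule.span 𝕜 {x : E | ∃ (k : ℕ) (i : ι), x = (T ^ k) (v i)} ≤ R ⊔ W := by
    rw [Submodule.span_le]
    rintro _ ⟨k, i, rfl⟩
    have := Module.End.pow_apply_mem_range_sub_smul_sup_span (T : E →ₗ[𝕜] E) w k (v i)
    rw [← ContinuousLinearMap.toLinearMap_pow, ContinuousLinearMap.coe_coe] at this
    have hvi : 𝕜 ∙ v i ≤ W := Submodule.span_mono (Set.singleton_subset_iff.2 ⟨i, rfl⟩)
    exact sup_le_sup_left hvi R this
  have hRW : W ⊔ R = ⊤ := by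
    rw [sup_comm, eq_top_iff, ← hv]
    exact Submodule.topologicalClosure_minimal _ horbit hRW_closed
  exact (Submodule.fg_span (Set.finite_range v)).cofg_of_codisjoint (codisjoint_iff.2 hRW)

end

/-- a finitely cyclic bounded operator with empty point spectrum has
approximate point spectrum equal to essential spectrum. -/
theorem approxPointSpectrum_eq_essentialSpectrum_of_finitelyCyclic
    (T : H →L[ℂ] H) (hcyc : FinitelyCyclic T)
    (hp : ∀ w : ℂ, LinearMap.ker ((T - w • (1 : H →L[ℂ] H)) : H →ₗ[ℂ] H) = ⊥) :
    approxPointSpectrum T = essentialSpectrum T := by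
  obtain ⟨m, v, hv⟩ := hcyc
  ext w
  have hinj : Function.Injective (T - w • (1 : H →L[ℂ] H)) := LinearMap.ker_eq_bot.1 (hp w)
  have hbdd_iff_closed : (∃ c : ℝ, 0 < c ∧ ∀ x : H, c * ‖x‖ ≤ ‖(T - w • (1 : H →L[ℂ] H)) x‖) ↔
      IsClosed (Set.range (T - w • (1 : H →L[ℂ] H))) :=
    antilipschitzWith_iff_exists_mul_le_norm.symm.trans
      (isClosed_range_iff_antilipschitz_of_injective _ hinj).symm
  change ¬ _ ↔ ¬ IsFredholmOp _
  rw [not_iff_not, hbdd_iff_closed]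
  refine ⟨fun hcl => ⟨?_, hcl, T.finiteDimensional_quotient_range_sub_smul_one v hv w hcl⟩,
    fun hA => hA.2.1⟩
  rw [LinearMap.ker_eq_bot.2 hinj]
  infer_instance
end

section
/- Let T be a leafless rooted directed tree with branching index k_T (where k_T = 1 + sup{n_w : w ∈ V_≺} if the set V_≺ of branching vertices is nonempty, and k_T = 0 otherwise). If k_T is finite, then the cardinality of Chi^⟨n⟩(root) is constant for n ≥ k_T. -/
open scoped InnerProductSpace ENNReal

/-- A directed graph on a vertex set `V`: a set of edges with no loops. -/
structure DirectedGraph (V : Type*) where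
  E : Set (V × V)
  not_loop : ∀ v : V, (v, v) ∉ E

namespace DirectedGraph

variable {V : Type*} (G : DirectedGraph V)

/-- undirected adjacency -/
def Adj (u v : V) : Prop := (u, v) ∈ G.E ∨ (v, u) ∈ G.E

/-- `G` has a circuit: a finite sequence of `n ≥ 2` distinct vertices, consecutively
joined by edges, with an edge from the last back to the first. -/
def HasCircuit : Prop :=
  ∃ (n : ℕ) (f : ℕ → V), 2 ≤ n ∧
    (∀ i j, i < n → j < n → f i = f j → i = j) ∧
    (∀ i, i + 1 < n → (f i, f (i + 1)) ∈ G.E) ∧ (f (n - 1), f 0) ∈ G.E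

/-- `G` is connected: any two distinct vertices are joined by a finite undirected path. -/
def Connected : Prop :=
  ∀ u v : V, u ≠ v → ∃ (n : ℕ) (f : ℕ → V), 2 ≤ n ∧ f 0 = u ∧ f (n - 1) = v ∧
    ∀ i, i + 1 < n → G.Adj (f i) (f (i + 1))

/-- `v` is a root: no edge ends at `v`. -/
def IsRoot (v : V) : Prop := ∀ u : V, (u, v) ∉ G.E

/-- `G` is a directed tree: it has no circuits, is connected, and every non-root
vertex has a unique parent. -/
def IsDirectedTree : Prop :=
  ¬ G.HasCircuit ∧ G.Connected ∧ ∀ v : V, ¬ G.IsRoot v → ∃! u : V, (u, v) ∈ G.E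

/-- the set of children of a vertex -/
def chi (u : V) : Set V := {v | (u, v) ∈ G.E}

/-- the children of a set of vertices -/
def chiSet (W : Set V) : Set V := {v | ∃ u ∈ W, (u, v) ∈ G.E}

/-- the `n`-th generation of descendants of a set of vertices -/
def chiIter (n : ℕ) (W : Set V) : Set V := (G.chiSet)^[n] W

/-- the set of branching vertices: vertices with at least two children -/
def Vprec : Set V := {u | ∃ a b : V, a ∈ G.chi u ∧ b ∈ G.chi u ∧ a ≠ b}

/-- `G` is leafless: every vertex has at least one child. -/
def Leafless : Prop := ∀ u : V, (G.chi u).Nonempty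

/-- `par` is a parent function for `G`: it sends every non-root vertex to its parent. -/
def IsParentFun (par : V → V) : Prop := ∀ v : V, ¬ G.IsRoot v → (par v, v) ∈ G.E

end DirectedGraph

section Shift

open scoped Classical

variable {V : Type*}

/-- the Hilbert space `ℓ²(V)` -/
noncomputable abbrev l2 (V : Type*) := lp (fun _ : V => ℂ) 2

/-- the standard orthonormal basis vector `e_u` of `ℓ²(V)` -/
noncomputable def evec (u : V) : l2 V := lp.single 2 u 1

/-- `S` is the weighted shift on the directed tree `G` with weights `w`, characterized by
its matrix entries: `⟪S e_u, e_v⟫ = w v` if `v` is a child of `u`, and `0` otherwise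
(equivalently, `S e_u = ∑_{v ∈ Chi(u)} w v • e_v`). -/
noncomputable def IsWeightedShift (G : DirectedGraph V) (w : V → ℝ) (S : l2 V →L[ℂ] l2 V) : Prop :=
  ∀ u v : V, ⟪S (evec u), evec v⟫_ℂ = if (u, v) ∈ G.E then (w v : ℂ) else 0

end Shift


lemma step_card {V : Type*} (G : DirectedGraph V)
    (htree : G.IsDirectedTree)
    (hleafless : G.Leafless)
    (A : Set V) (hA : ∀ u ∈ A, u ∉ G.Vprec) :
    Cardinal.mk A = Cardinal.mk (G.chiSet A) := by
  let f : A → G.chiSet A := fun u =>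
    ⟨(hleafless u.1).choose, ⟨u.1, u.2, (hleafless u.1).choose_spec⟩⟩
  have hbij : Function.Bijective f := by
    constructor
    · rintro ⟨u₁, h₁⟩ ⟨u₂, h₂⟩ h
      have hc : (hleafless u₁).choose = (hleafless u₂).choose := congrArg Subtype.val h
      set c := (hleafless u₁).choose with hcdef
      have e₁ : (u₁, c) ∈ G.E := (hleafless u₁).choose_spec
      have e₂ : (u₂, c) ∈ G.E := hc ▸ (hleafless u₂).choose_spec
      have hnr : ¬ G.IsRoot c := fun hr => hr u₁ e₁
      obtain ⟨p, _, hp⟩ := htree.2.2 c hnr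
      exact Subtype.ext ((hp u₁ e₁).trans (hp u₂ e₂).symm)
    · rintro ⟨v, u, hu, huv⟩
      refine ⟨⟨u, hu⟩, Subtype.ext ?_⟩
      by_contra hne
      exact hA u hu ⟨_, v, (hleafless u).choose_spec, huv, hne⟩
  exact Cardinal.mk_congr (Equiv.ofBijective f hbij)

/-- Let `G` be a leafless rooted directed tree whose branching index is
finite, i.e. there is `k : ℕ` such that every branching vertex lies in a generation
`< k` (so that `k_G = 1 + sup {n_w : w ∈ V_≺} ≤ k`, resp. `k_G = 0 ≤ k` if `V_≺ = ∅`).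
Then the cardinality of the generation `Chi^⟨n⟩(root)` is constant for `n ≥ k`. -/
theorem card_generation_eventually_constant {V : Type*} (G : DirectedGraph V)
    (htree : G.IsDirectedTree) (root : V) (hroot : G.IsRoot root)
    (hleafless : G.Leafless)
    (k : ℕ) (hk : ∀ u ∈ G.Vprec, ∀ n : ℕ, u ∈ G.chiIter n {root} → n < k)
    (hkmin : ∀ k' : ℕ, (∀ u ∈ G.Vprec, ∀ n : ℕ, u ∈ G.chiIter n {root} → n < k') → k ≤ k') :
    ∀ m n : ℕ, k ≤ m → k ≤ n →
      Cardinal.mk (G.chiIter m {root}) = Cardinal.mk (G.chiIter n {root}) := by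
  have key : ∀ n : ℕ, k ≤ n →
      Cardinal.mk (G.chiIter n {root}) = Cardinal.mk (G.chiIter k {root}) := by
    intro n hn
    induction n with
    | zero => simp [Nat.le_zero.mp hn]
    | succ n ih =>
      rcases Nat.lt_or_ge k (n+1) with h | h
      · have hkn : k ≤ n := Nat.lt_succ_iff.mp h
        have hstep : Cardinal.mk (G.chiIter n {root})
            = Cardinal.mk (G.chiSet (G.chiIter n {root})) := by
          apply step_card G htree hleafless
          intro u hu hup
          exact absurd (hk u hup n hu) (Nat.not_lt.mpr hkn)
        have : G.chiIter (n+1) {root} = G.chiSet (G.chiIter n {root}) := by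
          simp [DirectedGraph.chiIter, Function.iterate_succ_apply']
        rw [this, ← hstep, ih hkn]
      · have : k = n + 1 := le_antisymm hn h
        rw [this]
  intro m n hm hn
  rw [key m hm, key n hn]
end

section
/- Let T be a leafless rooted directed tree. The following are equivalent: (i) T is locally finite and the set V_≺ of branching vertices is finite; (ii) T is locally finite and the branching index k_T is finite; (iii) for any bounded weighted shift S_λ on T with positive weights, the kernel of S_λ* is finite-dimensional. -/
open scoped InnerProductSpace ENNReal

/-!
A vector `x` lies in `ker S*` iff `⟪S e_u, x⟫ = 0` for all `u`. When `u` has a single child `v`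
this says `x v = 0`, so if `V_≺` and all `Chi(u)` are finite, `ker S*` consists of vectors
supported on the finite set `{root} ∪ ⋃_{u ∈ V_≺} Chi(u)`. Conversely two siblings `a ≠ b` give
the kernel vector `λ_b e_a - λ_a e_b`; an infinite `Chi(u)` or an infinite `V_≺` yields infinitely
many sibling pairs with linearly independent kernel vectors, and every countable tree carries a
bounded shift with positive weights, namely a norm-convergent sum of rank-one operators along the
edges. Finiteness of `V_≺` is equivalent to bounded depths of branching vertices because every
vertex has a unique depth and each generation of a locally finite tree is finite.
-/

namespace DirectedGraph

variable {V : Type*} {G : DirectedGraph V}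

theorem IsDirectedTree.parent_unique (htree : G.IsDirectedTree) {u u' v : V}
    (h : (u, v) ∈ G.E) (h' : (u', v) ∈ G.E) : u = u' :=
  (htree.2.2 v fun hroot => hroot u h).unique h h'

theorem mem_chiIter_succ {n : ℕ} {W : Set V} {v : V} :
    v ∈ G.chiIter (n + 1) W ↔ ∃ u ∈ G.chiIter n W, (u, v) ∈ G.E := by
  rw [chiIter, Function.iterate_succ_apply']
  rfl

theorem IsRoot.notMem_chiIter_succ {r : V} (hr : G.IsRoot r) (n : ℕ) (W : Set V) :
    r ∉ G.chiIter (n + 1) W := fun h =>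
  let ⟨u, _, hu⟩ := mem_chiIter_succ.1 h
  hr u hu

theorem chiIter_finite (hchi : ∀ u, (G.chi u).Finite) {W : Set V} (hW : W.Finite) (n : ℕ) :
    (G.chiIter n W).Finite := by
  induction n with
  | zero => exact hW
  | succ n ih =>
    have : G.chiIter (n + 1) W = ⋃ u ∈ G.chiIter n W, G.chi u := by
      ext v
      simp only [mem_chiIter_succ, Set.mem_iUnion, exists_prop]
      rfl
    exact this ▸ ih.biUnion fun u _ => hchi u

variable {root : V}

theorem exists_mem_chiIter_of_adj (htree : G.IsDirectedTree) (hroot : G.IsRoot root)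
    {n : ℕ} {u v : V} (hu : u ∈ G.chiIter n {root}) (huv : G.Adj u v) :
    ∃ m, v ∈ G.chiIter m {root} := by
  rcases huv with h | h
  · exact ⟨n + 1, mem_chiIter_succ.2 ⟨u, hu, h⟩⟩
  · cases n with
    | zero => exact (hroot v (Set.mem_singleton_iff.1 hu ▸ h)).elim
    | succ n =>
      obtain ⟨p, hp, hpu⟩ := mem_chiIter_succ.1 hu
      exact ⟨n, htree.parent_unique h hpu ▸ hp⟩

theorem exists_mem_chiIter (htree : G.IsDirectedTree) (hroot : G.IsRoot root) (v : V) :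
    ∃ n, v ∈ G.chiIter n {root} := by
  by_cases hv : root = v
  · exact ⟨0, hv ▸ rfl⟩
  obtain ⟨n, f, hn, hf0, hfn, hadj⟩ := htree.2.1 root v hv
  have hpath : ∀ i < n, ∃ m, f i ∈ G.chiIter m {root} := by
    intro i
    induction i with
    | zero => exact fun _ => ⟨0, hf0⟩
    | succ i ih =>
      intro hi
      obtain ⟨m, hm⟩ := ih (by omega)
      exact exists_mem_chiIter_of_adj htree hroot hm (hadj i hi)
  exact hfn ▸ hpath (n - 1) (by omega)

theorem eq_of_mem_chiIter_root (htree : G.IsDirectedTree) (hroot : G.IsRoot root)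
    {n m : ℕ} {v : V} (hn : v ∈ G.chiIter n {root}) (hm : v ∈ G.chiIter m {root}) : n = m := by
  induction n generalizing m v with
  | zero =>
    cases m with
    | zero => rfl
    | succ m => exact (hroot.notMem_chiIter_succ m _ (Set.mem_singleton_iff.1 hn ▸ hm)).elim
  | succ n ih =>
    cases m with
    | zero => exact (hroot.notMem_chiIter_succ n _ (Set.mem_singleton_iff.1 hm ▸ hn)).elim
    | succ m =>
      obtain ⟨p, hp, hpv⟩ := mem_chiIter_succ.1 hn
      obtain ⟨q, hq, hqv⟩ := mem_chiIter_succ.1 hm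
      rw [ih hp (htree.parent_unique hqv hpv ▸ hq)]

theorem finite_iff_depth_bounded (htree : G.IsDirectedTree) (hroot : G.IsRoot root)
    (hchi : ∀ u, (G.chi u).Finite) {W : Set V} :
    W.Finite ↔ ∃ k : ℕ, ∀ u ∈ W, ∀ n : ℕ, u ∈ G.chiIter n {root} → n < k := by
  constructor
  · intro hW
    have hdepths : (⋃ u ∈ W, {n | u ∈ G.chiIter n {root}}).Finite :=
      hW.biUnion fun u _ => Set.Subsingleton.finite fun n hn m hm =>
        eq_of_mem_chiIter_root htree hroot hn hm
    obtain ⟨k, hk⟩ := hdepths.bddAbove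
    exact ⟨k + 1, fun u hu n hn => Nat.lt_succ_of_le (hk (Set.mem_biUnion hu hn))⟩
  · rintro ⟨k, hk⟩
    refine ((Finset.range k).finite_toSet.biUnion
      fun n _ => chiIter_finite hchi (Set.finite_singleton root) n).subset fun u hu => ?_
    obtain ⟨n, hn⟩ := exists_mem_chiIter htree hroot u
    exact Set.mem_biUnion (Finset.mem_range.2 (hk u hu n hn)) hn

end DirectedGraph

section WeightedShift

open scoped Classical

variable {V : Type*} {G : DirectedGraph V} {w : V → ℝ} {S : l2 V →L[ℂ] l2 V}

theorem evec_apply (u v : V) : (evec u : V → ℂ) v = if v = u then 1 else 0 := by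
  rw [evec, lp.single_apply, Pi.single_apply]

theorem inner_evec_left (u : V) (x : l2 V) : ⟪evec u, x⟫_ℂ = x u := by
  simp [evec, lp.inner_single_left]

theorem mem_ker_adjoint_iff (S : l2 V →L[ℂ] l2 V) (x : l2 V) :
    ContinuousLinearMap.adjoint S x = 0 ↔ ∀ u, ⟪S (evec u), x⟫_ℂ = 0 := by
  simp only [← ContinuousLinearMap.adjoint_inner_right, inner_evec_left]
  exact ⟨fun h u => by rw [h]; rfl, fun h => lp.ext (funext h)⟩

theorem finiteDimensional_of_forall_apply_eq_zero {𝕜 : Type*} [NormedField 𝕜]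
    {p : ℝ≥0∞} (K : Submodule 𝕜 (lp (fun _ : V => 𝕜) p)) {F : Set V} (hF : F.Finite)
    (hK : ∀ x ∈ K, ∀ v ∉ F, (x : V → 𝕜) v = 0) : FiniteDimensional 𝕜 K := by
  have := hF.to_subtype
  let restrict : K →ₗ[𝕜] F → 𝕜 :=
    LinearMap.pi fun v => (lp.evalₗ (fun _ : V => 𝕜) p v.1).comp K.subtype
  refine Module.Finite.of_injective restrict fun x y hxy =>
    Subtype.ext (lp.ext (funext fun v => ?_))
  by_cases hv : v ∈ F
  · exact congrFun hxy ⟨v, hv⟩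
  · rw [hK x x.2 v hv, hK y y.2 v hv]

theorem linearIndependent_of_apply_eq_zero {𝕜 ι : Type*} [NormedField 𝕜] {p : ℝ≥0∞}
    {y : ι → lp (fun _ : V => 𝕜) p} (a : ι → V) (hdiag : ∀ i, (y i : V → 𝕜) (a i) ≠ 0)
    (hoff : ∀ i j, j ≠ i → (y j : V → 𝕜) (a i) = 0) : LinearIndependent 𝕜 y := by
  rw [linearIndependent_iff']
  intro s g hsum i hi
  have hcoord := congrArg (fun z : lp (fun _ : V => 𝕜) p => (z : V → 𝕜) (a i)) hsum
  simp only [lp.coeFn_sum, Finset.sum_apply, lp.coeFn_smul, Pi.smul_apply, smul_eq_mul,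
    lp.coeFn_zero, Pi.zero_apply] at hcoord
  rw [Finset.sum_eq_single_of_mem i hi fun j _ hji => by rw [hoff i j hji, mul_zero]] at hcoord
  exact (mul_eq_zero.1 hcoord).resolve_right (hdiag i)

theorem IsWeightedShift.apply_evec (hS : IsWeightedShift G w S) (u v : V) :
    (S (evec u) : V → ℂ) v = if (u, v) ∈ G.E then (w v : ℂ) else 0 := by
  rw [← inner_evec_left, ← inner_conj_symm, hS u v]
  split_ifs <;> simp

theorem IsWeightedShift.apply_evec_eq_smul (hS : IsWeightedShift G w S) {u v : V}
    (huv : (u, v) ∈ G.E) (hu : u ∉ G.Vprec) : S (evec u) = (w v : ℂ) • evec v := by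
  refine lp.ext (funext fun s => ?_)
  rw [lp.coeFn_smul, Pi.smul_apply, hS.apply_evec, evec_apply, smul_eq_mul]
  by_cases hs : s = v
  · simp [hs, huv]
  · have hus : (u, s) ∉ G.E := fun hus => hu ⟨s, v, hus, huv, hs⟩
    simp [hs, hus]

theorem IsWeightedShift.apply_eq_zero_of_mem_ker_adjoint (hS : IsWeightedShift G w S)
    (hw : ∀ v, 0 < w v) {u v : V} (huv : (u, v) ∈ G.E) (hu : u ∉ G.Vprec) {x : l2 V}
    (hx : ContinuousLinearMap.adjoint S x = 0) : (x : V → ℂ) v = 0 := by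
  have h := (mem_ker_adjoint_iff S x).1 hx u
  rw [hS.apply_evec_eq_smul huv hu, inner_smul_left, inner_evec_left, Complex.conj_ofReal] at h
  exact (mul_eq_zero.1 h).resolve_left (Complex.ofReal_ne_zero.2 (hw v).ne')

theorem IsWeightedShift.sibling_mem_ker_adjoint (hS : IsWeightedShift G w S)
    (htree : G.IsDirectedTree) {p a b : V} (ha : (p, a) ∈ G.E) (hb : (p, b) ∈ G.E) :
    ContinuousLinearMap.adjoint S ((w b : ℂ) • evec a - (w a : ℂ) • evec b) = 0 := by
  refine (mem_ker_adjoint_iff S _).2 fun u => ?_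
  rw [inner_sub_right, inner_smul_right, inner_smul_right, hS u a, hS u b]
  by_cases hu : u = p
  · simp only [hu, ha, hb, if_true]
    ring
  · rw [if_neg fun h => hu (htree.parent_unique h ha),
      if_neg fun h => hu (htree.parent_unique h hb), mul_zero, mul_zero, sub_zero]

/-- The `tsum` is `0` unless the sum converges. -/
noncomputable def edgeShift (G : DirectedGraph V) (w : V → ℝ) : l2 V →L[ℂ] l2 V :=
  ∑' e : G.E, (w e.1.2 : ℂ) • InnerProductSpace.rankOne ℂ (evec e.1.2) (evec e.1.1)

theorem inner_evec_smul_rankOne_evec (e : V × V) (u v : V) :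
    ⟪evec v, ((w e.2 : ℂ) • InnerProductSpace.rankOne ℂ (evec e.2) (evec e.1)) (evec u)⟫_ℂ =
      if e = (u, v) then (w v : ℂ) else 0 := by
  obtain ⟨s, t⟩ := e
  simp only [FunLike.coe_smul, Pi.smul_apply, InnerProductSpace.rankOne_apply,
    inner_smul_right, inner_evec_left, evec_apply, Prod.mk.injEq]
  by_cases hs : s = u
  · by_cases ht : t = v
    · subst hs ht
      simp
    · simp [hs, ht, Ne.symm ht]
  · simp [hs]

theorem isWeightedShift_edgeShift (hw : Summable fun e : G.E => w e.1.2) :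
    IsWeightedShift G w (edgeShift G w) := by
  have hT : Summable fun e : G.E =>
      (w e.1.2 : ℂ) • InnerProductSpace.rankOne ℂ (evec e.1.2) (evec e.1.1) := by
    refine .of_norm_bounded hw.abs fun e => ?_
    rw [norm_smul, InnerProductSpace.norm_rankOne, evec, evec, lp.norm_single (by norm_num),
      lp.norm_single (by norm_num)]
    simp
  intro u v
  have hsum : HasSum (fun e : G.E => if e.1 = (u, v) then (w v : ℂ) else 0)
      ⟪evec v, edgeShift G w (evec u)⟫_ℂ := by
    have h := hT.hasSum.mapL
      ((innerSL ℂ (evec v)).comp (ContinuousLinearMap.apply ℂ (l2 V) (evec u)))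
    simp only [ContinuousLinearMap.comp_apply, ContinuousLinearMap.apply_apply,
      innerSL_apply_apply, inner_evec_smul_rankOne_evec] at h
    exact h
  have hval : ⟪evec v, edgeShift G w (evec u)⟫_ℂ = if (u, v) ∈ G.E then (w v : ℂ) else 0 := by
    split_ifs with huv
    · refine hsum.unique ?_
      convert hasSum_single (⟨(u, v), huv⟩ : G.E) fun e he => if_neg fun h => he (Subtype.ext h)
      exact (if_pos rfl).symm
    · refine hsum.unique ?_
      convert hasSum_zero with e
      exact if_neg fun h : e.1 = (u, v) => huv (h ▸ e.2)
  rw [← inner_conj_symm, hval]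
  split_ifs <;> simp

theorem exists_isWeightedShift [Countable V] (htree : G.IsDirectedTree) :
    ∃ (w : V → ℝ) (S : l2 V →L[ℂ] l2 V), (∀ v, 0 < w v) ∧ IsWeightedShift G w S := by
  obtain ⟨ι, hι⟩ := Countable.exists_injective_nat V
  have hedge : Function.Injective fun e : G.E => e.1.2 := fun e e' (h : e.1.2 = e'.1.2) =>
    Subtype.ext (Prod.ext (htree.parent_unique e.2 (h ▸ e'.2)) h)
  exact ⟨fun v => (1 / 2) ^ ι v, _, fun v => by positivity, isWeightedShift_edgeShift
    ((summable_geometric_two.comp_injective hι).comp_injective hedge)⟩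

end WeightedShift

section Cokernel

open DirectedGraph

variable {V : Type*} {G : DirectedGraph V}

theorem finiteDimensional_ker_adjoint {root : V} (htree : G.IsDirectedTree)
    (hroot : G.IsRoot root) (hchi : ∀ u, (G.chi u).Finite) (hVprec : G.Vprec.Finite)
    {w : V → ℝ} {S : l2 V →L[ℂ] l2 V} (hw : ∀ v, 0 < w v) (hS : IsWeightedShift G w S) :
    FiniteDimensional ℂ
      (LinearMap.ker ((ContinuousLinearMap.adjoint S : l2 V →L[ℂ] l2 V) : l2 V →ₗ[ℂ] l2 V)) := by
  refine finiteDimensional_of_forall_apply_eq_zero _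
    ((hVprec.biUnion fun u _ => hchi u).insert root) fun x hx v hv => ?_
  obtain ⟨n, hn⟩ := exists_mem_chiIter htree hroot v
  cases n with
  | zero => exact (hv (Set.mem_insert_iff.2 (Or.inl hn))).elim
  | succ n =>
    obtain ⟨u, -, huv⟩ := mem_chiIter_succ.1 hn
    have hu : u ∉ G.Vprec := fun hu => hv (Set.mem_insert_of_mem _ (Set.mem_biUnion hu huv))
    exact hS.apply_eq_zero_of_mem_ker_adjoint hw huv hu hx

def HasSiblingSequence (G : DirectedGraph V) : Prop :=
  ∃ p a b : ℕ → V, (∀ n, (p n, a n) ∈ G.E ∧ (p n, b n) ∈ G.E) ∧ Function.Injective a ∧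
    ∀ n m, a n ≠ b m

theorem hasSiblingSequence_of_infinite_chi {u : V} (hu : (G.chi u).Infinite) :
    HasSiblingSequence G := by
  let e := hu.natEmbedding
  refine ⟨fun _ => u, fun n => e (2 * n), fun n => e (2 * n + 1),
    fun n => ⟨(e _).2, (e _).2⟩, fun n m h => ?_, fun n m h => ?_⟩ <;>
  · have := e.injective (Subtype.ext h)
    omega

theorem hasSiblingSequence_of_infinite_vprec (htree : G.IsDirectedTree)
    (hVprec : G.Vprec.Infinite) : HasSiblingSequence G := by
  let e := hVprec.natEmbedding
  choose a b ha hb hab using fun n => (e n).2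
  have hparent : ∀ {n m}, (e m : V) = e n → n = m := fun h =>
    (e.injective (Subtype.ext h)).symm
  refine ⟨fun n => e n, a, b, fun n => ⟨ha n, hb n⟩, fun n m h => ?_, fun n m h => ?_⟩
  · exact hparent (htree.parent_unique (h ▸ ha m) (ha n))
  · obtain rfl := hparent (htree.parent_unique (h ▸ hb m) (ha n))
    exact hab n h

theorem hasSiblingSequence_of_not_finite (htree : G.IsDirectedTree)
    (h : ¬((∀ u, (G.chi u).Finite) ∧ G.Vprec.Finite)) : HasSiblingSequence G := by
  by_cases hchi : ∀ u, (G.chi u).Finite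
  · exact hasSiblingSequence_of_infinite_vprec htree fun hVprec => h ⟨hchi, hVprec⟩
  · obtain ⟨u, hu⟩ := not_forall.1 hchi
    exact hasSiblingSequence_of_infinite_chi hu

theorem IsWeightedShift.not_finiteDimensional_ker_adjoint {w : V → ℝ} {S : l2 V →L[ℂ] l2 V}
    (hS : IsWeightedShift G w S) (hw : ∀ v, 0 < w v) (htree : G.IsDirectedTree)
    (hsib : HasSiblingSequence G) :
    ¬FiniteDimensional ℂ
      (LinearMap.ker ((ContinuousLinearMap.adjoint S : l2 V →L[ℂ] l2 V) : l2 V →ₗ[ℂ] l2 V)) := by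
  obtain ⟨p, a, b, hedges, ha, hab⟩ := hsib
  let y : ℕ → l2 V := fun n => (w (b n) : ℂ) • evec (a n) - (w (a n) : ℂ) • evec (b n)
  have hy : ∀ i n, (y n : V → ℂ) (a i) = if n = i then (w (b i) : ℂ) else 0 := by
    intro i n
    simp only [y, lp.coeFn_sub, lp.coeFn_smul, Pi.sub_apply, Pi.smul_apply, smul_eq_mul,
      evec_apply, if_neg (hab i n), mul_zero, sub_zero, ha.eq_iff]
    by_cases h : n = i
    · simp [h]
    · simp [h, Ne.symm h]
  have hli : LinearIndependent ℂ y := linearIndependent_of_apply_eq_zero a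
    (fun i => by simpa [hy] using (hw (b i)).ne') fun i n hn => by simp [hy, hn]
  intro hfin
  exact Module.Finite.not_linearIndependent_of_infinite
    (fun n => (⟨y n, hS.sibling_mem_ker_adjoint htree (hedges n).1 (hedges n).2⟩ :
      LinearMap.ker ((ContinuousLinearMap.adjoint S : l2 V →L[ℂ] l2 V) : l2 V →ₗ[ℂ] l2 V)))
    (LinearIndependent.of_comp (Submodule.subtype _) hli)

end Cokernel

theorem locallyFinite_branching_tfae_general {V : Type*} [Countable V]
    (G : DirectedGraph V)
    (htree : G.IsDirectedTree) (root : V) (hroot : G.IsRoot root) :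
    List.TFAE
      [ (∀ u : V, (G.chi u).Finite) ∧ G.Vprec.Finite,
        (∀ u : V, (G.chi u).Finite) ∧
          ∃ k : ℕ, ∀ u ∈ G.Vprec, ∀ n : ℕ, u ∈ G.chiIter n {root} → n < k,
        ∀ (w : V → ℝ) (S : l2 V →L[ℂ] l2 V), (∀ v, 0 < w v) → IsWeightedShift G w S →
          FiniteDimensional ℂ
            (LinearMap.ker ((ContinuousLinearMap.adjoint S : l2 V →L[ℂ] l2 V) :
              l2 V →ₗ[ℂ] l2 V)) ] := by
  tfae_have 1 ↔ 2 := and_congr_right fun hchi =>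
    DirectedGraph.finite_iff_depth_bounded htree hroot hchi
  tfae_have 1 → 3 := fun ⟨hchi, hVprec⟩ _ _ hw hS =>
    finiteDimensional_ker_adjoint htree hroot hchi hVprec hw hS
  tfae_have 3 → 1 := by
    intro h3
    by_contra h
    obtain ⟨w, S, hw, hS⟩ := exists_isWeightedShift htree
    exact hS.not_finiteDimensional_ker_adjoint hw htree
      (hasSiblingSequence_of_not_finite htree h) (h3 w S hw hS)
  tfae_finish

/-- For a countably infinite leafless rooted directed tree `G`, TFAE:
(i) `G` is locally finite and the set `V_≺` of branching vertices is finite;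
(ii) `G` is locally finite and the branching index is finite;
(iii) every bounded weighted shift on `G` with positive weights has
finite-dimensional cokernel `ker S*`. -/
theorem locallyFinite_branching_tfae {V : Type*} [Countable V] [Infinite V]
    (G : DirectedGraph V)
    (htree : G.IsDirectedTree) (root : V) (hroot : G.IsRoot root)
    (hleafless : G.Leafless) :
    List.TFAE
      [ (∀ u : V, (G.chi u).Finite) ∧ G.Vprec.Finite,
        (∀ u : V, (G.chi u).Finite) ∧
          ∃ k : ℕ, ∀ u ∈ G.Vprec, ∀ n : ℕ, u ∈ G.chiIter n {root} → n < k,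
        ∀ (w : V → ℝ) (S : l2 V →L[ℂ] l2 V), (∀ v, 0 < w v) → IsWeightedShift G w S →
          FiniteDimensional ℂ
            (LinearMap.ker ((ContinuousLinearMap.adjoint S : l2 V →L[ℂ] l2 V) :
              l2 V →ₗ[ℂ] l2 V)) ] :=
  locallyFinite_branching_tfae_general G htree root hroot
end

section
/- Let T = (V, E) be a rootless directed tree with finite branching index (there is a smallest m ≥ 0 such that Chi^⟨k⟩(V_≺) ∩ V_≺ = ∅ for all k ≥ m) and nonempty set V_≺ of branching vertices. Then there exists a unique vertex ω ∈ V_≺ such that card(Chi(par^⟨k⟩(ω))) = 1 for all integers k ≥ 1. -/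
open scoped InnerProductSpace ENNReal

/-!
Follow parents from a branching vertex `v`. Finite branching index means that only finitely
many ancestors `par^[k] v` branch (otherwise `v` would be a `k`-th generation descendant of a
branching vertex for arbitrarily large `k`), so the highest branching ancestor `ω` of `v` has
no branching proper ancestor; since every proper ancestor has a child, this says each of them
has exactly one. If `ω'` is another such vertex, connectedness gives a common ancestor
`par^[k] ω' = par^[j] ω`. Walking down from it, each vertex on the way is non-branching, so the
two lines of descent agree until one of them reaches `ω` or `ω'`; as that vertex branches, both
lines reach it at once and `ω = ω'`.
-/

namespace DirectedGraph

variable {V : Type*} {G : DirectedGraph V} {par : V → V}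

def IsGeneralizedRoot (G : DirectedGraph V) (par : V → V) (ω : V) : Prop :=
  ω ∈ G.Vprec ∧ ∀ k, par^[k + 1] ω ∉ G.Vprec

theorem notMem_Vprec_iff {u : V} : u ∉ G.Vprec ↔ (G.chi u).Subsingleton := by
  simp only [Vprec, Set.mem_ofPred_eq, not_exists, not_and, not_not]
  exact ⟨fun h a ha b hb => h a b ha hb, fun h a b ha hb => h ha hb⟩

theorem existsUnique_mem_chi_iff {u : V} (hu : (G.chi u).Nonempty) :
    (∃! c, c ∈ G.chi u) ↔ u ∉ G.Vprec := by
  rw [notMem_Vprec_iff]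
  obtain ⟨a, ha⟩ := hu
  exact ⟨fun ⟨c, _, hc⟩ x hx y hy => (hc x hx).trans (hc y hy).symm,
    fun h => ⟨a, ha, fun y hy => h hy ha⟩⟩

section ParentFunction

variable (hpar : ∀ v, (par v, v) ∈ G.E)
include hpar

theorem eq_par_of_mem_E (huniq : ∀ v, ¬ G.IsRoot v → ∃! u, (u, v) ∈ G.E) {a b : V}
    (hab : (a, b) ∈ G.E) : a = par b :=
  (huniq b fun hb => hb a hab).unique hab (hpar b)

theorem iterate_par_mem_chi (k : ℕ) (v : V) : par^[k] v ∈ G.chi (par^[k + 1] v) := by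
  rw [Function.iterate_succ_apply']
  exact hpar _

theorem isGeneralizedRoot_iff {ω : V} : G.IsGeneralizedRoot par ω ↔
    ω ∈ G.Vprec ∧ ∀ k : ℕ, 1 ≤ k → ∃! c : V, c ∈ G.chi (par^[k] ω) := by
  have hchi (k : ℕ) : (∃! c, c ∈ G.chi (par^[k + 1] ω)) ↔ par^[k + 1] ω ∉ G.Vprec :=
    existsUnique_mem_chi_iff ⟨_, iterate_par_mem_chi hpar k ω⟩
  refine and_congr_right fun _ => ⟨fun h k hk => ?_, fun h k => (hchi k).1 (h (k + 1) k.succ_pos)⟩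
  obtain ⟨k, rfl⟩ := Nat.exists_eq_add_of_le' hk
  exact (hchi k).2 (h k)

theorem mem_chiIter_of_iterate_par_mem {W : Set V} {k : ℕ} {v : V} (hv : par^[k] v ∈ W) :
    v ∈ G.chiIter k W := by
  induction k generalizing v with
  | zero => exact hv
  | succ k ih =>
    rw [chiIter, Function.iterate_succ_apply']
    exact ⟨par v, ih hv, hpar v⟩

theorem exists_isGeneralizedRoot {v : V} (hv : v ∈ G.Vprec) {m : ℕ}
    (hm : ∀ k, m ≤ k → G.chiIter k G.Vprec ∩ G.Vprec = ∅) :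
    ∃ ω, G.IsGeneralizedRoot par ω := by
  classical
  have hbound (k : ℕ) (hk : par^[k] v ∈ G.Vprec) : k < m := by
    by_contra! hmk
    exact (hm k hmk).subset ⟨mem_chiIter_of_iterate_par_mem hpar hk, hv⟩
  -- the highest branching ancestor of `v`
  let P (k : ℕ) : Prop := par^[k] v ∈ G.Vprec
  refine ⟨par^[Nat.findGreatest P m] v, Nat.findGreatest_spec (P := P) m.zero_le hv,
    fun j hj => ?_⟩
  rw [← Function.iterate_add_apply] at hj
  exact Nat.findGreatest_is_greatest (P := P) (by omega) (hbound _ hj).le hj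

theorem exists_iterate_par_eq_of_connected (hconn : G.Connected)
    (huniq : ∀ v, ¬ G.IsRoot v → ∃! u, (u, v) ∈ G.E) (u v : V) :
    ∃ k j : ℕ, par^[k] u = par^[j] v := by
  rcases eq_or_ne u v with rfl | huv
  · exact ⟨0, 0, rfl⟩
  obtain ⟨n, f, hn, rfl, rfl, hadj⟩ := hconn u v huv
  suffices ∀ i < n, ∃ k j : ℕ, par^[k] (f 0) = par^[j] (f i) from this (n - 1) (by omega)
  intro i hi
  induction i with
  | zero => exact ⟨0, 0, rfl⟩
  | succ i ih =>
    obtain ⟨k, j, hkj⟩ := ih (by omega)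
    rcases hadj i hi with hE | hE
    · refine ⟨k, j + 1, ?_⟩
      rw [hkj, Function.iterate_succ_apply, ← eq_par_of_mem_E hpar huniq hE]
    · refine ⟨k + 1, j, ?_⟩
      rw [Function.iterate_succ_apply', hkj, eq_par_of_mem_E hpar huniq hE,
        ← Function.iterate_succ_apply, Function.iterate_succ_apply']

theorem IsGeneralizedRoot.eq_of_iterate_par_eq {ω ω' : V} (hω : G.IsGeneralizedRoot par ω)
    (hω' : G.IsGeneralizedRoot par ω') {k j : ℕ} (h : par^[k] ω' = par^[j] ω) : ω' = ω := by
  induction k generalizing j with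
  | zero =>
    cases j with
    | zero => exact h
    | succ j => exact absurd (h ▸ hω'.1) (hω.2 j)
  | succ k ih =>
    cases j with
    | zero => exact absurd (h ▸ hω.1) (hω'.2 k)
    | succ j =>
      have hsub := notMem_Vprec_iff.1 (hω'.2 k)
      exact ih (j := j) (hsub (iterate_par_mem_chi hpar k ω') (h ▸ iterate_par_mem_chi hpar j ω))

end ParentFunction

end DirectedGraph

theorem exists_unique_generalized_root_general {V : Type*} (G : DirectedGraph V)
    (htree : G.IsDirectedTree)
    (par : V → V) (hpar : ∀ v : V, (par v, v) ∈ G.E)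
    (hfin : ∃ m : ℕ, ∀ k : ℕ, m ≤ k → G.chiIter k G.Vprec ∩ G.Vprec = ∅)
    (hne : G.Vprec.Nonempty) :
    ∃! ω : V, ω ∈ G.Vprec ∧ ∀ k : ℕ, 1 ≤ k → ∃! c : V, c ∈ G.chi (par^[k] ω) := by
  obtain ⟨-, hconn, huniq⟩ := htree
  obtain ⟨m, hm⟩ := hfin
  obtain ⟨v, hv⟩ := hne
  obtain ⟨ω, hω⟩ := DirectedGraph.exists_isGeneralizedRoot hpar hv hm
  refine ⟨ω, (DirectedGraph.isGeneralizedRoot_iff hpar).1 hω, fun ω' hω' => ?_⟩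
  obtain ⟨k, j, hkj⟩ :=
    DirectedGraph.exists_iterate_par_eq_of_connected hpar hconn huniq ω' ω
  exact hω.eq_of_iterate_par_eq hpar ((DirectedGraph.isGeneralizedRoot_iff hpar).2 hω') hkj

/-- Let `G` be a rootless directed tree with finite branching index
(there is `m` with `Chi^⟨k⟩(V_≺) ∩ V_≺ = ∅` for all `k ≥ m`) and nonempty set `V_≺`
of branching vertices. Then there is a unique vertex `ω ∈ V_≺` (the generalized root)
such that `card (Chi (par^⟨k⟩ ω)) = 1` for all `k ≥ 1`. -/
theorem exists_unique_generalized_root {V : Type*} (G : DirectedGraph V)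
    (htree : G.IsDirectedTree) (hrootless : ∀ v : V, ¬ G.IsRoot v)
    (par : V → V) (hpar : ∀ v : V, (par v, v) ∈ G.E)
    (hfin : ∃ m : ℕ, ∀ k : ℕ, m ≤ k → G.chiIter k G.Vprec ∩ G.Vprec = ∅)
    (hne : G.Vprec.Nonempty) :
    ∃! ω : V, ω ∈ G.Vprec ∧ ∀ k : ℕ, 1 ≤ k → ∃! c : V, c ∈ G.chi (par^[k] ω) :=
  exists_unique_generalized_root_general G htree par hpar hfin hne
end
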